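/- (Lemma A.4) For Adam, under assumptions (S1)-(S3) and (A1)-(A2), for all k ∈ ℕ and all θ ∈ ℝ^d: E[(θ_k − θ)ᵀ m_k] ≤ D(θ)M^{1/4}/(v_*^{1/4} β_{1k}) · √(σ²/b + G²) + α_k √(β̃_{2k})/(2√(v_*) β_{1k} β̃_{1k}) · (σ²/b + G²) + D(θ) G · β̂_{1k}/β_{1k} + β̂_{1k} D(θ)(B + √(σ²/b + G²)). -/

import Mathlib

open MeasureTheory Filter Real
open scoped InnerProductSpace

/-!
The proof gives the stronger bound `E⟪θ_k - θ, m_k⟫ ≤ D(θ) √(σ²/b + G²)`. Since the stochastic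
gradient is conditionally unbiased, its noise is orthogonal to the gradient, so
`E‖g_k‖² = E‖g_k - ∇f(θ_k)‖² + E‖∇f(θ_k)‖² ≤ σ²/b + G²`, and `E‖g_k‖ ≤ √(σ²/b + G²)` by Jensen.
The momentum `m_k` is a convex combination of `m_{k-1}` and `g_k`, so `E‖m_k‖` obeys the same
bound, and Cauchy–Schwarz with `‖θ_k - θ‖ ≤ D(θ)` gives the estimate. It is dominated by the
first term of the right-hand side: `v_* ≤ v_{0,i} ≤ g_{0,i}² ≤ M` and `β_{1k} < 1` make
`M^{1/4} / (v_*^{1/4} β_{1k}) ≥ 1`, and all other terms are nonnegative.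
-/

lemma Real.rpow_nonneg_of_abs_le_half {y : ℝ} (hy : |y| ≤ 1 / 2) (x : ℝ) : 0 ≤ x ^ y := by
  rcases le_or_gt 0 x with hx | hx
  · exact rpow_nonneg hx y
  · rw [rpow_def_of_neg hx]
    refine mul_nonneg (exp_pos _).le (cos_nonneg_of_mem_Icc ⟨?_, ?_⟩) <;>
      nlinarith [abs_le.mp hy, pi_pos]

lemma one_le_rpow_div_rpow_mul {v M p β : ℝ} (hv : 0 < v) (hvM : v ≤ M) (hp : 0 ≤ p)
    (hβ0 : 0 < β) (hβ1 : β ≤ 1) : 1 ≤ M ^ p / (v ^ p * β) := by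
  rw [one_le_div (by positivity)]
  calc v ^ p * β ≤ v ^ p := mul_le_of_le_one_right (rpow_nonneg hv.le p) hβ1
    _ ≤ M ^ p := rpow_le_rpow hv.le hvM hp

lemma integral_le_sqrt_integral_sq {Ω : Type*} [MeasurableSpace Ω] {μ : Measure Ω}
    [IsProbabilityMeasure μ] {X : Ω → ℝ} (hX : MemLp X 2 μ) :
    ∫ ω, X ω ∂μ ≤ √(∫ ω, X ω ^ 2 ∂μ) := by
  refine (le_abs_self _).trans (abs_le_sqrt ?_)
  have hvar := ProbabilityTheory.variance_eq_sub hX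
  simp only [Pi.pow_apply] at hvar
  linarith [ProbabilityTheory.variance_nonneg X μ]

section InnerProductSpace

variable {Ω E : Type*} {m mΩ : MeasurableSpace Ω} {μ : Measure Ω}
  [NormedAddCommGroup E] [InnerProductSpace ℝ E]

lemma MeasureTheory.MemLp.integrable_inner {X Y : Ω → E} (hX : MemLp X 2 μ) (hY : MemLp Y 2 μ) :
    Integrable (fun ω ↦ ⟪X ω, Y ω⟫_ℝ) μ :=
  (hX.norm.integrable_mul hY.norm).mono' (hX.1.inner hY.1)
    (Eventually.of_forall fun ω ↦ norm_inner_le_norm (X ω) (Y ω))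

lemma integral_inner_le_mul_integral_norm {X Y : Ω → E} {D : ℝ}
    (hX : AEStronglyMeasurable X μ) (hXD : ∀ᵐ ω ∂μ, ‖X ω‖ ≤ D) (hY : Integrable Y μ) :
    ∫ ω, ⟪X ω, Y ω⟫_ℝ ∂μ ≤ D * ∫ ω, ‖Y ω‖ ∂μ := by
  have hbound : ∀ᵐ ω ∂μ, ‖⟪X ω, Y ω⟫_ℝ‖ ≤ D * ‖Y ω‖ := by
    filter_upwards [hXD] with ω hω
    exact (norm_inner_le_norm _ _).trans (mul_le_mul_of_nonneg_right hω (norm_nonneg _))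
  have hDY := hY.norm.const_mul D
  rw [← integral_const_mul]
  exact integral_mono_ae (hDY.mono' (hX.inner hY.1) hbound) hDY
    (hbound.mono fun ω hω ↦ (le_abs_self _).trans hω)

variable [CompleteSpace E]

lemma integral_inner_eq_integral_norm_sq_of_condExp_eq {g Y : Ω → E} (hm : m ≤ mΩ)
    [SigmaFinite (μ.trim hm)] (hY : StronglyMeasurable[m] Y)
    (hYg : Integrable (fun ω ↦ ⟪Y ω, g ω⟫_ℝ) μ) (hg : Integrable g μ)
    (hcond : μ[g | m] =ᵐ[μ] Y) :
    ∫ ω, ⟪Y ω, g ω⟫_ℝ ∂μ = ∫ ω, ‖Y ω‖ ^ 2 ∂μ := by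
  rw [← integral_condExp hm]
  refine integral_congr_ae ?_
  filter_upwards [condExp_bilin_of_stronglyMeasurable_left (innerSL ℝ) hY hYg hg, hcond]
    with ω hω hω'
  exact hω.trans (by rw [hω']; exact real_inner_self_eq_norm_sq _)

lemma integral_norm_sq_eq_of_condExp_eq [IsFiniteMeasure μ] {g Y : Ω → E} (hm : m ≤ mΩ)
    (hY : StronglyMeasurable[m] Y) (hg : MemLp g 2 μ) (hY2 : MemLp Y 2 μ)
    (hcond : μ[g | m] =ᵐ[μ] Y) :
    ∫ ω, ‖g ω‖ ^ 2 ∂μ = ∫ ω, ‖g ω - Y ω‖ ^ 2 ∂μ + ∫ ω, ‖Y ω‖ ^ 2 ∂μ := by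
  have hYg := hY2.integrable_inner hg
  have hcross := integral_inner_eq_integral_norm_sq_of_condExp_eq hm hY hYg
    (hg.integrable one_le_two) hcond
  have hsub_sq : Integrable (fun ω ↦ ‖g ω - Y ω‖ ^ 2) μ :=
    (hg.sub hY2).integrable_norm_pow two_ne_zero
  have hY_sq : Integrable (fun ω ↦ ‖Y ω‖ ^ 2) μ := hY2.integrable_norm_pow two_ne_zero
  have hpt : ∀ ω, ‖g ω‖ ^ 2 = ‖g ω - Y ω‖ ^ 2 + 2 * ⟪Y ω, g ω⟫_ℝ - ‖Y ω‖ ^ 2 := by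
    intro ω
    rw [norm_sub_sq_real, real_inner_comm]
    ring
  simp_rw [hpt]
  rw [integral_sub (by exact hsub_sq.add (hYg.const_mul 2)) hY_sq,
    integral_add hsub_sq (hYg.const_mul 2), integral_const_mul, hcross]
  ring

lemma integral_norm_le_sqrt_of_condExp_eq [IsProbabilityMeasure μ] {X : Type*} [MeasurableSpace X]
    {θ : Ω → X} {F : X → E} {g : Ω → E} {σ G : ℝ} (hθ : Measurable θ) (hF : StronglyMeasurable F)
    (hg : MemLp g 2 μ) (hFG : ∀ᵐ ω ∂μ, ‖F (θ ω)‖ ≤ G)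
    (hcond : μ[g | MeasurableSpace.comap θ inferInstance] =ᵐ[μ] fun ω ↦ F (θ ω))
    (hvar : ∫ ω, ‖g ω - F (θ ω)‖ ^ 2 ∂μ ≤ σ) :
    ∫ ω, ‖g ω‖ ∂μ ≤ √(σ + G ^ 2) := by
  have hFθ : StronglyMeasurable[MeasurableSpace.comap θ inferInstance] (fun ω ↦ F (θ ω)) :=
    hF.comp_measurable (comap_measurable θ)
  have hF2 : ∫ ω, ‖F (θ ω)‖ ^ 2 ∂μ ≤ G ^ 2 := by
    calc ∫ ω, ‖F (θ ω)‖ ^ 2 ∂μ ≤ ∫ _, G ^ 2 ∂μ :=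
          integral_mono_of_nonneg (ae_of_all _ fun _ ↦ by positivity) (integrable_const _)
            (hFG.mono fun ω hω ↦ pow_le_pow_left₀ (norm_nonneg _) hω 2)
      _ = G ^ 2 := by simp
  calc ∫ ω, ‖g ω‖ ∂μ ≤ √(∫ ω, ‖g ω‖ ^ 2 ∂μ) := integral_le_sqrt_integral_sq hg.norm
    _ ≤ √(σ + G ^ 2) := by
      refine sqrt_le_sqrt ?_
      rw [integral_norm_sq_eq_of_condExp_eq hθ.comap_le hFθ hg
        (MemLp.of_bound (hFθ.mono hθ.comap_le).aestronglyMeasurable G hFG) hcond]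
      exact add_le_add hvar hF2

end InnerProductSpace

section Momentum

variable {Ω E : Type*} [MeasurableSpace Ω] {μ : Measure Ω} [NormedAddCommGroup E] [NormedSpace ℝ E]

lemma integrable_and_integral_norm_smul_add_one_sub_smul_le {a C : ℝ} (ha0 : 0 ≤ a) (ha1 : a ≤ 1)
    {x y : Ω → E} (hx : Integrable x μ) (hy : Integrable y μ)
    (hxC : ∫ ω, ‖x ω‖ ∂μ ≤ C) (hyC : ∫ ω, ‖y ω‖ ∂μ ≤ C) :
    Integrable (fun ω ↦ a • x ω + (1 - a) • y ω) μ ∧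
      ∫ ω, ‖a • x ω + (1 - a) • y ω‖ ∂μ ≤ C := by
  have hx' := hx.norm.const_mul a
  have hy' := hy.norm.const_mul (1 - a)
  refine ⟨(hx.smul a).add (hy.smul (1 - a)), ?_⟩
  calc ∫ ω, ‖a • x ω + (1 - a) • y ω‖ ∂μ ≤ ∫ ω, (a * ‖x ω‖ + (1 - a) * ‖y ω‖) ∂μ := by
        refine integral_mono ((hx.smul a).add (hy.smul (1 - a))).norm (hx'.add hy') fun ω ↦ ?_
        refine (norm_add_le _ _).trans_eq ?_
        rw [norm_smul, norm_smul, Real.norm_of_nonneg ha0, Real.norm_of_nonneg (sub_nonneg.2 ha1)]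
    _ = a * ∫ ω, ‖x ω‖ ∂μ + (1 - a) * ∫ ω, ‖y ω‖ ∂μ := by
        rw [integral_add hx' hy', integral_const_mul, integral_const_mul]
    _ ≤ C := by nlinarith

lemma integrable_and_integral_norm_momentum_le {β : ℕ → ℝ} (hβ : ∀ k, β k ∈ Set.Icc (0 : ℝ) 1)
    {g m mp : ℕ → Ω → E} (hmp0 : ∀ ω, mp 0 ω = 0)
    (hm : ∀ k ω, m k ω = β k • mp k ω + (1 - β k) • g k ω) (hshift : ∀ k ω, mp (k + 1) ω = m k ω)
    (hg : ∀ k, Integrable (g k) μ) {C : ℝ} (hgC : ∀ k, ∫ ω, ‖g k ω‖ ∂μ ≤ C) (k : ℕ) :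
    Integrable (m k) μ ∧ ∫ ω, ‖m k ω‖ ∂μ ≤ C := by
  have step : ∀ k, Integrable (mp k) μ → ∫ ω, ‖mp k ω‖ ∂μ ≤ C →
      Integrable (m k) μ ∧ ∫ ω, ‖m k ω‖ ∂μ ≤ C := by
    intro k hmp hmpC
    rw [funext (hm k)]
    exact integrable_and_integral_norm_smul_add_one_sub_smul_le (hβ k).1 (hβ k).2
      hmp (hg k) hmpC (hgC k)
  suffices ∀ k, Integrable (mp k) μ ∧ ∫ ω, ‖mp k ω‖ ∂μ ≤ C from step k (this k).1 (this k).2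
  intro k
  induction k with
  | zero =>
    rw [funext hmp0]
    simpa using (integral_nonneg fun _ ↦ norm_nonneg _).trans (hgC 0)
  | succ k ih =>
    rw [funext (hshift k)]
    exact step k ih.1 ih.2

end Momentum

theorem adam_lemmaA4_general
    {Ω : Type*} [MeasurableSpace Ω] (μ : Measure Ω) [IsProbabilityMeasure μ]
    {d : ℕ} (f : EuclideanSpace ℝ (Fin d) → ℝ)
    (θ m mp v g : ℕ → Ω → EuclideanSpace ℝ (Fin d))
    (α β1 β2 : ℕ → ℝ)
    (σ2 b G B M vstar : ℝ)
    (D : EuclideanSpace ℝ (Fin d) → ℝ)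
    (hf : ContDiff ℝ 1 f)
    (hb : 0 < b) (hσ2 : 0 ≤ σ2) (hG : 0 < G) (hB : 0 < B)
    (hαpos : ∀ k, 0 < α k)
    (hmp0 : ∀ ω, mp 0 ω = 0)
    (hmrec : ∀ k ω, m k ω = β1 k • mp k ω + (1 - β1 k) • g k ω)
    (hmpshift : ∀ k ω, mp (k+1) ω = m k ω)
    (hv0 : ∀ ω (i : Fin d), v 0 ω i = (1 - β2 0) * (g 0 ω i) ^ 2)
    (hθmeas : ∀ k, Measurable (θ k)) (hgmeas : ∀ k, Measurable (g k))
    (hunbiased : ∀ k, μ[g k | MeasurableSpace.comap (θ k) inferInstance]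
        =ᵐ[μ] fun ω => gradient f (θ k ω))
    (hvar : ∀ k, ∫ ω, ‖g k ω - gradient f (θ k ω)‖ ^ 2 ∂μ ≤ σ2 / b)
    (hGbd : ∀ k, ∀ᵐ ω ∂μ, ‖gradient f (θ k ω)‖ ≤ G)
    (hBbd : ∀ k, ∀ᵐ ω ∂μ, ‖g k ω‖ ≤ B)
    (hDpos : ∀ x, 0 < D x)
    (hDbd : ∀ x k, ∀ᵐ ω ∂μ, ‖θ k ω - x‖ ≤ D x)
    (hM : ∀ k, ∀ᵐ ω ∂μ, ∀ i, (g k ω i) ^ 2 ≤ M)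
    (hvstar : 0 < vstar)
    (hvstarle : ∀ k, ∀ᵐ ω ∂μ, ∀ i, vstar ≤ v k ω i)
    (hβ1mem : ∀ k, β1 k ∈ Set.Ioo (0:ℝ) 1) (hβ2mem : ∀ k, β2 k ∈ Set.Ico (0:ℝ) 1)
    :
    ∀ (k : ℕ) (x : EuclideanSpace ℝ (Fin d)),
      ∫ ω, (inner ℝ (θ k ω - x) (m k ω) : ℝ) ∂μ ≤
        D x * M ^ ((1:ℝ)/4) / (vstar ^ ((1:ℝ)/4) * β1 k) * Real.sqrt (σ2 / b + G ^ 2)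
        + α k * Real.sqrt (1 - (β2 k) ^ (k+1)) / (2 * Real.sqrt vstar * β1 k * (1 - (β1 k) ^ (k+1))) * (σ2 / b + G ^ 2)
        + D x * G * ((1 - β1 k) / β1 k)
        + (1 - β1 k) * D x * (B + Real.sqrt (σ2 / b + G ^ 2)) := by
  intro k x
  set C := √(σ2 / b + G ^ 2)
  have hgrad : StronglyMeasurable (gradient f) :=
    ((InnerProductSpace.toDual ℝ _).symm.continuous.comp
      (hf.continuous_fderiv one_ne_zero)).stronglyMeasurable
  have hg2 : ∀ j, MemLp (g j) 2 μ := fun j ↦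
    MemLp.of_bound (hgmeas j).aestronglyMeasurable B (hBbd j)
  have hEg : ∀ j, ∫ ω, ‖g j ω‖ ∂μ ≤ C := fun j ↦ integral_norm_le_sqrt_of_condExp_eq (hθmeas j)
    hgrad (hg2 j) (hGbd j) (hunbiased j) (hvar j)
  obtain ⟨hm_int, hEm⟩ := integrable_and_integral_norm_momentum_le
    (fun j ↦ Set.Ioo_subset_Icc_self (hβ1mem j)) hmp0 hmrec hmpshift
    (fun j ↦ (hg2 j).integrable one_le_two) hEg k
  obtain ⟨hβ0, hβ1⟩ := hβ1mem k
  have hD : 0 ≤ D x := (hDpos x).le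
  have hβ1' : 0 ≤ 1 - β1 k := by linarith
  have hβpow : 0 ≤ 1 - β1 k ^ (k + 1) := sub_nonneg.2 (pow_le_one₀ hβ0.le hβ1.le)
  have hα := hαpos k
  refine le_add_of_le_of_nonneg (le_add_of_le_of_nonneg
    (le_add_of_le_of_nonneg ?_ (by positivity)) (by positivity)) (by positivity)
  rcases Nat.eq_zero_or_pos d with rfl | hd
  · -- `M` is unconstrained here, and `M ^ (1/4)` is `exp (log M / 4) * cos (π / 4)` for `M < 0`.
    have hM4 : 0 ≤ M ^ ((1:ℝ)/4) := rpow_nonneg_of_abs_le_half (by norm_num [abs_of_pos]) M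
    have h0 : ∀ ω, ⟪θ k ω - x, m k ω⟫_ℝ = 0 := fun ω ↦ by
      rw [Subsingleton.elim (θ k ω - x) 0, inner_zero_left]
    simp only [h0, integral_zero]
    positivity
  have hvM : vstar ≤ M := by
    obtain ⟨ω, hMω, hvω⟩ := ((hM 0).and (hvstarle 0)).exists
    let i : Fin d := ⟨0, hd⟩
    nlinarith [hv0 ω i, hMω i, hvω i, (hβ2mem 0).1, sq_nonneg (g 0 ω i)]
  calc ∫ ω, ⟪θ k ω - x, m k ω⟫_ℝ ∂μ ≤ D x * ∫ ω, ‖m k ω‖ ∂μ :=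
        integral_inner_le_mul_integral_norm ((hθmeas k).sub_const x).aestronglyMeasurable
          (hDbd x k) hm_int
    _ ≤ D x * 1 * C := by rw [mul_one]; exact mul_le_mul_of_nonneg_left hEm hD
    _ ≤ _ := by
        rw [mul_div_assoc]
        gcongr
        exact one_le_rpow_div_rpow_mul hvstar hvM (by norm_num) hβ0 hβ1.le

theorem adam_lemmaA4
    {Ω : Type*} [MeasurableSpace Ω] (μ : Measure Ω) [IsProbabilityMeasure μ]
    {d : ℕ} (f : EuclideanSpace ℝ (Fin d) → ℝ)
    (θ m mp v g dvec : ℕ → Ω → EuclideanSpace ℝ (Fin d))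
    (vhat : ℕ → Ω → Fin d → ℝ)
    (α β1 β2 : ℕ → ℝ)
    (σ2 b G B M vstar : ℝ)
    (D : EuclideanSpace ℝ (Fin d) → ℝ)
    (hf : ContDiff ℝ 1 f)
    (hb : 0 < b) (hσ2 : 0 ≤ σ2) (hG : 0 < G) (hB : 0 < B)
    (hαpos : ∀ k, 0 < α k)
    (hmp0 : ∀ ω, mp 0 ω = 0)
    (hmrec : ∀ k ω, m k ω = β1 k • mp k ω + (1 - β1 k) • g k ω)
    (hmpshift : ∀ k ω, mp (k+1) ω = m k ω)
    (hv0 : ∀ ω (i : Fin d), v 0 ω i = (1 - β2 0) * (g 0 ω i) ^ 2)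
    (hvrec : ∀ k ω (i : Fin d), v (k+1) ω i = β2 (k+1) * v k ω i + (1 - β2 (k+1)) * (g (k+1) ω i) ^ 2)
    (hvhat : ∀ k ω (i : Fin d), vhat k ω i = v k ω i / (1 - (β2 k) ^ (k+1)))
    (hdvec : ∀ k ω (i : Fin d), dvec k ω i = -(m k ω i / (1 - (β1 k) ^ (k+1))) / Real.sqrt (vhat k ω i))
    (hθrec : ∀ k ω, θ (k+1) ω = θ k ω + α k • dvec k ω)
    (hθmeas : ∀ k, Measurable (θ k)) (hgmeas : ∀ k, Measurable (g k))
    (hunbiased : ∀ k, μ[g k | MeasurableSpace.comap (θ k) inferInstance]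
        =ᵐ[μ] fun ω => gradient f (θ k ω))
    (hvar : ∀ k, ∫ ω, ‖g k ω - gradient f (θ k ω)‖ ^ 2 ∂μ ≤ σ2 / b)
    (hGbd : ∀ k, ∀ᵐ ω ∂μ, ‖gradient f (θ k ω)‖ ≤ G)
    (hBbd : ∀ k, ∀ᵐ ω ∂μ, ‖g k ω‖ ≤ B)
    (hDpos : ∀ x, 0 < D x)
    (hDbd : ∀ x k, ∀ᵐ ω ∂μ, ‖θ k ω - x‖ ≤ D x)
    (hM : ∀ k, ∀ᵐ ω ∂μ, ∀ i, (g k ω i) ^ 2 ≤ M)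
    (hvstar : 0 < vstar)
    (hvstarle : ∀ k, ∀ᵐ ω ∂μ, ∀ i, vstar ≤ v k ω i)
    (hβ1mem : ∀ k, β1 k ∈ Set.Ioo (0:ℝ) 1) (hβ2mem : ∀ k, β2 k ∈ Set.Ico (0:ℝ) 1)
    :
    ∀ (k : ℕ) (x : EuclideanSpace ℝ (Fin d)),
      ∫ ω, (inner ℝ (θ k ω - x) (m k ω) : ℝ) ∂μ ≤
        D x * M ^ ((1:ℝ)/4) / (vstar ^ ((1:ℝ)/4) * β1 k) * Real.sqrt (σ2 / b + G ^ 2)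
        + α k * Real.sqrt (1 - (β2 k) ^ (k+1)) / (2 * Real.sqrt vstar * β1 k * (1 - (β1 k) ^ (k+1))) * (σ2 / b + G ^ 2)
        + D x * G * ((1 - β1 k) / β1 k)
        + (1 - β1 k) * D x * (B + Real.sqrt (σ2 / b + G ^ 2)) :=
  adam_lemmaA4_general μ f θ m mp v g α β1 β2 σ2 b G B M vstar D hf hb hσ2 hG hB hαpos hmp0 hmrec
    hmpshift hv0 hθmeas hgmeas hunbiased hvar hGbd hBbd hDpos hDbd hM hvstar hvstarle hβ1mem hβ2mem
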